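/- Let A, B ∈ ℤ[x] be coprime monic polynomials with resultant Δ, and let p be a prime with ν_p(Δ) = 1. Then there is a residue class r mod p such that for all integers n: p divides gcd(A(n), B(n)) if and only if n ≡ r (mod p), and moreover p² never divides gcd(A(n), B(n)). -/

import Mathlib

open Polynomial

/-- The Sylvester matrix of two integer polynomials `A` and `B`, of size
`(d+e) × (d+e)` where `d = deg A`, `e = deg B`: the first `e` columns carry the
(shifted) coefficients of `A`, the last `d` columns those of `B`. -/
noncomputable def sylvesterMatrix (A B : Polynomial ℤ) :
    Matrix (Fin (A.natDegree + B.natDegree)) (Fin (A.natDegree + B.natDegree)) ℤ :=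
  Matrix.of fun i j =>
    if (j : ℕ) < B.natDegree then
      if (j : ℕ) ≤ (i : ℕ) ∧ (i : ℕ) ≤ (j : ℕ) + A.natDegree then
        A.coeff (A.natDegree + (j : ℕ) - (i : ℕ)) else 0
    else
      if (j : ℕ) - B.natDegree ≤ (i : ℕ) ∧ (i : ℕ) ≤ (j : ℕ) then
        B.coeff ((j : ℕ) - (i : ℕ)) else 0

/-- The resultant of two integer polynomials, as the determinant of their Sylvester matrix. -/
noncomputable def resultant (A B : Polynomial ℤ) : ℤ := (sylvesterMatrix A B).det

/-!
By Bézout for resultants, `U A + V B = Res(A, B)` with `U, V ∈ ℤ[X]`, so `p² ∣ A(n), B(n)` would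
force `p² ∣ Res(A, B)`. Modulo `p`, the reductions `Ā, B̄` are not coprime since `p ∣ Res(A, B)`.
A common factor of degree at least `2` would give two independent kernel vectors of the Sylvester
matrix modulo `p`, and then `p²` divides its determinant. Hence `gcd(Ā, B̄)` is linear, its root
`r` is the only common root of `Ā` and `B̄` in `𝔽_p`, and `p ∣ gcd(A(n), B(n))` iff `n ≡ r`.
-/

open Matrix

theorem sylvesterMatrix_eq_submatrix_sylvester (A B : ℤ[X]) :
    sylvesterMatrix A B = (A.sylvester B A.natDegree B.natDegree).submatrix Fin.rev Fin.rev := by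
  ext i j
  rw [← Fin.rev_rev i, ← Fin.rev_rev j]
  generalize i.rev = i
  generalize j.rev = j
  induction j using Fin.addCases with
  | left j =>
    simp only [sylvesterMatrix, sylvester, of_apply, submatrix_apply, Set.mem_Icc, Fin.rev_rev,
      Fin.addCases_left, Fin.val_rev, Fin.val_castAdd]
    have := i.isLt; have := j.isLt
    split_ifs <;> first | omega | (congr 1; omega)
  | right j =>
    simp only [sylvesterMatrix, sylvester, of_apply, submatrix_apply, Set.mem_Icc, Fin.rev_rev,
      Fin.addCases_right, Fin.val_rev, Fin.val_natAdd]
    have := i.isLt; have := j.isLt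
    split_ifs <;> first | omega | (congr 1; omega)

theorem resultant_eq_polynomial_resultant (A B : ℤ[X]) : _root_.resultant A B = A.resultant B := by
  rw [_root_.resultant, sylvesterMatrix_eq_submatrix_sylvester]
  exact det_submatrix_equiv_self Fin.revPerm _

namespace Matrix

variable {m n R : Type*} [Fintype n] [DecidableEq n] [CommRing R]

theorem det_updateCol_mulVec (M : Matrix n n R) (j : n) (v : n → R) :
    (M.updateCol j (M *ᵥ v)).det = v j * M.det := by
  rw [← cramer_apply, cramer_eq_adjugate_mulVec, mulVec_mulVec, adjugate_mul, smul_mulVec,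
    one_mulVec, Pi.smul_apply, smul_eq_mul, mul_comm]

theorem updateCol_mulVec_of_apply_eq_zero (M : Matrix m n R) (j : n) (c : m → R) {v : n → R}
    (hv : v j = 0) : M.updateCol j c *ᵥ v = M *ᵥ v := by
  ext i
  refine Finset.sum_congr rfl fun k _ => ?_
  by_cases hk : k = j
  · simp [hk, hv]
  · simp [hk]

theorem sq_dvd_det_of_dvd_col (M : Matrix n n R) {a : R} {j₀ j₁ : n} (hj : j₀ ≠ j₁)
    (h₀ : ∀ i, a ∣ M i j₀) (h₁ : ∀ i, a ∣ M i j₁) : a ^ 2 ∣ M.det := by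
  choose u₀ hu₀ using h₀
  choose u₁ hu₁ using h₁
  have hM : M = (M.updateCol j₀ (a • u₀)).updateCol j₁ (a • u₁) := by
    ext i k
    by_cases hk₁ : k = j₁
    · subst hk₁; simp [hu₁]
    by_cases hk₀ : k = j₀
    · subst hk₀; simp [hk₁, hu₀]
    · simp [hk₀, hk₁]
  rw [hM, det_updateCol_smul, updateCol_comm _ hj, det_updateCol_smul, ← mul_assoc, ← sq]
  exact dvd_mul_right _ _

/-- Replacing columns `j₀` and `j₁` of `M` by `M *ᵥ v₁` and `M *ᵥ v₂` multiplies the determinant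
by `v₁ j₀ * v₂ j₁`, which is prime to `a`, and leaves two columns divisible by `a`. -/
theorem sq_dvd_det_of_dvd_mulVec [IsDomain R] (M : Matrix n n R) {a : R} (ha : Prime a)
    {v₁ v₂ : n → R} {j₀ j₁ : n} (hj : j₀ ≠ j₁)
    (h₁ : ∀ i, a ∣ (M *ᵥ v₁) i) (h₂ : ∀ i, a ∣ (M *ᵥ v₂) i)
    (hv₁ : ¬ a ∣ v₁ j₀) (hv₂₀ : v₂ j₀ = 0) (hv₂ : ¬ a ∣ v₂ j₁) : a ^ 2 ∣ M.det := by
  set M₁ := M.updateCol j₀ (M *ᵥ v₁)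
  have hM₁ : M₁ *ᵥ v₂ = M *ᵥ v₂ := updateCol_mulVec_of_apply_eq_zero _ _ _ hv₂₀
  have key : a ^ 2 ∣ (M₁.updateCol j₁ (M₁ *ᵥ v₂)).det := by
    refine sq_dvd_det_of_dvd_col _ hj (fun i => ?_) (fun i => ?_)
    · simpa [M₁, hj] using h₁ i
    · simpa [hM₁] using h₂ i
  rw [det_updateCol_mulVec, det_updateCol_mulVec] at key
  exact ha.pow_dvd_of_dvd_mul_left 2 hv₁ (ha.pow_dvd_of_dvd_mul_left 2 hv₂ key)

theorem sq_dvd_det_of_linearIndependent_ker {p : ℕ} [Fact p.Prime] (M : Matrix n n ℤ)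
    {w₁ w₂ : n → ZMod p} (hw : LinearIndependent (ZMod p) ![w₁, w₂])
    (h₁ : M.map (Int.cast : ℤ → ZMod p) *ᵥ w₁ = 0) (h₂ : M.map (Int.cast : ℤ → ZMod p) *ᵥ w₂ = 0) :
    (p : ℤ) ^ 2 ∣ M.det := by
  obtain ⟨j₀, hj₀⟩ := Function.ne_iff.mp (hw.ne_zero 0)
  set w := w₁ j₀ • w₂ - w₂ j₀ • w₁
  obtain ⟨j₁, hj₁⟩ : ∃ j, w j ≠ 0 := by
    refine Function.ne_iff.mp fun hw0 => hj₀ ?_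
    refine (LinearIndependent.pair_iff.mp hw (-w₂ j₀) (w₁ j₀) ?_).2
    rw [neg_smul, add_comm, ← sub_eq_add_neg]
    exact hw0
  have hw₀ : w j₀ = 0 := by simp [w, mul_comm]
  have hwker : M.map (Int.cast : ℤ → ZMod p) *ᵥ w = 0 := by
    simp [w, mulVec_sub, mulVec_smul, h₁, h₂]
  -- a lift that sends `0` to `0`, so that the lift of `w` still vanishes at `j₀`
  let lift (x : n → ZMod p) : n → ℤ := fun i => ((x i).val : ℤ)
  have lift_dvd_iff (x : n → ZMod p) (i : n) : (p : ℤ) ∣ lift x i ↔ x i = 0 := by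
    simp [lift, ← ZMod.intCast_zmod_eq_zero_iff_dvd]
  have dvd_mulVec_lift {x : n → ZMod p} (hx : M.map (Int.cast : ℤ → ZMod p) *ᵥ x = 0) (i : n) :
      (p : ℤ) ∣ (M *ᵥ lift x) i := by
    rw [← ZMod.intCast_zmod_eq_zero_iff_dvd, ← eq_intCast (Int.castRingHom _), RingHom.map_mulVec]
    simpa [lift, Function.comp_def] using congrFun hx i
  refine sq_dvd_det_of_dvd_mulVec M (Nat.prime_iff_prime_int.mp Fact.out)
    (by rintro rfl; exact hj₁ hw₀) (dvd_mulVec_lift h₁) (dvd_mulVec_lift hwker)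
    (mt (lift_dvd_iff _ _).mp hj₀) (by simp [lift, hw₀]) (mt (lift_dvd_iff _ _).mp hj₁)

end Matrix

theorem exists_linearIndependent_sylvester_mulVec_eq_zero {K : Type*} [Field K] {f g h : K[X]}
    {m n : ℕ} (hf : f.natDegree ≤ m) (hg : g.natDegree ≤ n) (hf₀ : f ≠ 0) (hhf : h ∣ f)
    (hhg : h ∣ g) (hh : 2 ≤ h.natDegree) :
    ∃ w₁ w₂ : Fin (m + n) → K, LinearIndependent K ![w₁, w₂] ∧
      sylvester f g m n *ᵥ w₁ = 0 ∧ sylvester f g m n *ᵥ w₂ = 0 := by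
  let b := ((degreeLT.basis K m).prod (degreeLT.basis K n)).reindex finSumFinEquiv
  have hker {y} (hy : sylvesterMap f g hf hg y = 0) : sylvester f g m n *ᵥ b.repr y = 0 := by
    rw [← toMatrix_sylvesterMap' _ _ hf hg, LinearMap.toMatrix_mulVec_repr, hy, map_zero,
      Finsupp.coe_zero]
  suffices ∃ y₁ y₂, LinearIndependent K ![y₁, y₂] ∧
      sylvesterMap f g hf hg y₁ = 0 ∧ sylvesterMap f g hf hg y₂ = 0 by
    obtain ⟨y₁, y₂, hy, hy₁, hy₂⟩ := this
    refine ⟨b.repr y₁, b.repr y₂, ?_, hker hy₁, hker hy₂⟩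
    refine LinearIndependent.pair_iff.mpr fun s t hst => LinearIndependent.pair_iff.mp hy s t ?_
    rw [← b.repr.map_eq_zero_iff, map_add, map_smul, map_smul]
    exact DFunLike.coe_injective hst
  obtain ⟨f₁, rfl⟩ := hhf
  obtain ⟨g₁, rfl⟩ := hhg
  have hh₀ : h ≠ 0 := by rintro rfl; simp at hh
  have hf₁ : f₁ ≠ 0 := right_ne_zero_of_mul hf₀
  have hdeg {q : K[X]} {k : ℕ} (hq : (h * q).natDegree ≤ k) {s : K[X]} (hs : s.natDegree ≤ 1) :
      q * s ∈ K[X]_k := by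
    rw [mem_degreeLT]
    rcases eq_or_ne q 0 with rfl | hq₀
    · simp
    rw [natDegree_mul hh₀ hq₀] at hq
    exact (degree_le_of_natDegree_le (natDegree_mul_le.trans (by omega :
      q.natDegree + s.natDegree ≤ k - 1))).trans_lt (by exact_mod_cast (by omega : k - 1 < k))
  -- `(P, Q) ↦ f * Q + g * P` kills `(f₁ * s, -(g₁ * s))`; `deg h ≥ 2` leaves room for `s = X`
  let y (s : K[X]) (hs : s.natDegree ≤ 1) : K[X]_m × K[X]_n :=
    (⟨f₁ * s, hdeg hf hs⟩, -⟨g₁ * s, hdeg hg hs⟩)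
  refine ⟨y 1 (by simp), y X natDegree_X_le, ?_, ?_, ?_⟩
  · refine LinearIndependent.pair_iff.mpr fun s t hst => ?_
    have hst₁ := congrArg (fun z => (z.1 : K[X])) hst
    simp only [y, Prod.smul_fst, Prod.fst_add, Submodule.coe_add, Submodule.coe_smul,
      smul_eq_C_mul, mul_one, Prod.fst_zero, ZeroMemClass.coe_zero] at hst₁
    have hst' : C s + C t * X = 0 :=
      (mul_eq_zero.mp (by linear_combination hst₁ : (C s + C t * X) * f₁ = 0)).resolve_right hf₁
    exact ⟨by simpa using congrArg (coeff · 0) hst', by simpa using congrArg (coeff · 1) hst'⟩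
  all_goals ext1; simp [y]; ring

theorem exists_isRoot_and_isRoot_iff_eq {K : Type*} [Field K] {f g : K[X]} (hf : f ≠ 0)
    (hfg : ¬ IsCoprime f g) (hdeg : ∀ h, h ∣ f → h ∣ g → h.natDegree < 2) :
    ∃ r, ∀ x, f.IsRoot x ∧ g.IsRoot x ↔ x = r := by
  obtain ⟨z, hz, hzf, hzg⟩ : ∃ z, Irreducible z ∧ z ∣ f ∧ z ∣ g := by
    by_contra! H
    exact hfg (isCoprime_of_irreducible_dvd (fun h => hf h.1) H)
  have hz₁ : z.natDegree = 1 := by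
    have := natDegree_pos_iff_degree_pos.mpr (degree_pos_of_irreducible hz)
    have := hdeg z hzf hzg
    omega
  obtain ⟨r, hr⟩ :=
    exists_root_of_degree_eq_one ((degree_eq_iff_natDegree_eq_of_pos one_pos).mpr hz₁)
  have hrf : f.IsRoot r := eval_eq_zero_of_dvd_of_eval_eq_zero hzf hr
  have hrg : g.IsRoot r := eval_eq_zero_of_dvd_of_eval_eq_zero hzg hr
  refine ⟨r, fun x => ⟨fun ⟨hxf, hxg⟩ => ?_, by rintro rfl; exact ⟨hrf, hrg⟩⟩⟩
  by_contra hxr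
  have hcop : IsCoprime (X - C x) (X - C r) :=
    isCoprime_X_sub_C_of_isUnit_sub (sub_ne_zero.mpr hxr).isUnit
  have := hdeg _ (hcop.mul_dvd (dvd_iff_isRoot.mpr hxf) (dvd_iff_isRoot.mpr hrf))
    (hcop.mul_dvd (dvd_iff_isRoot.mpr hxg) (dvd_iff_isRoot.mpr hrg))
  rw [natDegree_mul (X_sub_C_ne_zero x) (X_sub_C_ne_zero r), natDegree_X_sub_C,
    natDegree_X_sub_C] at this
  omega

theorem dvd_resultant_of_dvd_eval {R : Type*} [CommRing R] {f g : R[X]}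
    (hfg : f.natDegree ≠ 0 ∨ g.natDegree ≠ 0) {x a : R} (hf : a ∣ f.eval x) (hg : a ∣ g.eval x) :
    a ∣ f.resultant g := by
  obtain ⟨u, v, -, -, huv⟩ := exists_mul_add_mul_eq_C_resultant f g le_rfl le_rfl hfg
  rw [← eval_C (a := f.resultant g) (x := x), ← huv, eval_add, eval_mul, eval_mul]
  exact dvd_add (hf.mul_right _) (hg.mul_right _)

theorem resultant_map_of_monic {R S : Type*} [CommRing R] [CommRing S] [Nontrivial S]
    (φ : R →+* S) {f g : R[X]} (hf : f.Monic) (hg : g.Monic) :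
    (f.map φ).resultant (g.map φ) = φ (f.resultant g) := by
  rw [← resultant_map_map, hf.natDegree_map, hg.natDegree_map]

theorem dvd_and_not_sq_dvd_of_padicValInt_eq_one {p : ℕ} [Fact p.Prime] {a : ℤ}
    (h : padicValInt p a = 1) : (p : ℤ) ∣ a ∧ ¬ (p : ℤ) ^ 2 ∣ a := by
  refine ⟨by simpa using (padicValInt_dvd_iff 1 a).mpr (Or.inr h.ge), fun h2 => ?_⟩
  rcases (padicValInt_dvd_iff 2 a).mp h2 with rfl | h2
  · simp at h
  · omega

section ModPrime

variable {p : ℕ} [Fact p.Prime] {A B : ℤ[X]}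

theorem not_isCoprime_map_of_dvd_resultant (hA : A.Monic) (hB : B.Monic)
    (h : (p : ℤ) ∣ A.resultant B) :
    ¬ IsCoprime (A.map (Int.castRingHom (ZMod p))) (B.map (Int.castRingHom (ZMod p))) :=
  (resultant_eq_zero_iff.mp (by
    rwa [resultant_map_of_monic _ hA hB, eq_intCast, ZMod.intCast_zmod_eq_zero_iff_dvd])).2

theorem natDegree_lt_two_of_dvd_map (hA : A.Monic) (hB : B.Monic)
    (h : ¬ (p : ℤ) ^ 2 ∣ A.resultant B) {q : (ZMod p)[X]}
    (hqA : q ∣ A.map (Int.castRingHom (ZMod p))) (hqB : q ∣ B.map (Int.castRingHom (ZMod p))) :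
    q.natDegree < 2 := by
  by_contra! hq
  obtain ⟨w₁, w₂, hw, h₁, h₂⟩ := exists_linearIndependent_sylvester_mulVec_eq_zero
    (hA.natDegree_map _).le (hB.natDegree_map _).le (hA.map _).ne_zero hqA hqB hq
  rw [sylvester_map_map, RingHom.mapMatrix_apply, Int.coe_castRingHom] at h₁ h₂
  exact h (sq_dvd_det_of_linearIndependent_ker _ hw h₁ h₂)

end ModPrime

theorem pattern_of_valuation_one_general (A B : Polynomial ℤ)
    (hA : A.Monic) (hB : B.Monic)
    (p : ℕ) (hp : p.Prime) (hval : padicValInt p (_root_.resultant A B) = 1) :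
    ∃ r : ℤ,
      (∀ n : ℤ, (p : ℤ) ∣ (Int.gcd (A.eval n) (B.eval n) : ℤ) ↔ n ≡ r [ZMOD (p : ℤ)]) ∧
      ∀ n : ℤ, ¬ ((p : ℤ) ^ 2 ∣ (Int.gcd (A.eval n) (B.eval n) : ℤ)) := by
  have : Fact p.Prime := ⟨hp⟩
  rw [resultant_eq_polynomial_resultant] at hval
  obtain ⟨hpΔ, hp2Δ⟩ := dvd_and_not_sq_dvd_of_padicValInt_eq_one hval
  have hdeg : A.natDegree ≠ 0 ∨ B.natDegree ≠ 0 := by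
    by_contra! h
    rw [h.1, h.2, resultant_zero_left_deg, pow_zero] at hpΔ
    exact hp.one_lt.ne' (by exact_mod_cast Int.eq_one_of_dvd_one (by positivity) hpΔ)
  obtain ⟨r, hr⟩ := exists_isRoot_and_isRoot_iff_eq (hA.map _).ne_zero
    (not_isCoprime_map_of_dvd_resultant hA hB hpΔ) fun q => natDegree_lt_two_of_dvd_map hA hB hp2Δ
  have hgcd (n : ℤ) : (p : ℤ) ∣ (Int.gcd (A.eval n) (B.eval n) : ℤ) ↔ (n : ZMod p) = r := by
    rw [Int.dvd_coe_gcd_iff, ← ZMod.intCast_zmod_eq_zero_iff_dvd,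
      ← ZMod.intCast_zmod_eq_zero_iff_dvd, ← hr]
    simp [eval_intCast_map]
  refine ⟨r.val, fun n => ?_, fun n h => hp2Δ ?_⟩
  · rw [hgcd, ← ZMod.intCast_eq_intCast_iff]
    simp
  · exact dvd_resultant_of_dvd_eval hdeg (h.trans (Int.gcd_dvd_left _ _))
      (h.trans (Int.gcd_dvd_right _ _))

theorem pattern_of_valuation_one (A B : Polynomial ℤ)
    (hA : A.Monic) (hB : B.Monic)
    (hcop : IsCoprime (A.map (Int.castRingHom ℚ)) (B.map (Int.castRingHom ℚ)))
    (p : ℕ) (hp : p.Prime) (hval : padicValInt p (_root_.resultant A B) = 1) :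
    ∃ r : ℤ,
      (∀ n : ℤ, (p : ℤ) ∣ (Int.gcd (A.eval n) (B.eval n) : ℤ) ↔ n ≡ r [ZMOD (p : ℤ)]) ∧
      ∀ n : ℤ, ¬ ((p : ℤ) ^ 2 ∣ (Int.gcd (A.eval n) (B.eval n) : ℤ)) :=
  pattern_of_valuation_one_general A B hA hB p hp hval
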